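/- arXiv:2002.11584 — 2 statements merged into one kernel-verified Lean document; each statement's English description precedes it below -/
import Mathlib

section
/- Let A be a d×d symmetric positive definite real matrix, and let G : [0,∞) → [0,∞) be C¹ with G(0) = 0 and lim_{r→∞} √r G'(r) = 1/√2. Define Φ_A(z) = G(‖z‖_A²/2) where ‖z‖_A = √(zAzᵀ). Then the recession function of Φ_A satisfies Φ_A^∞(z) = ‖z‖_A for all z ∈ ℝ^d. -/
/-!
Along the ray through `z ≠ 0`, with `q = z ⬝ᵥ A *ᵥ z > 0`, one has `Φ_A(λz) = G(λ² q/2)`. By the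
chain rule the derivative of `λ ↦ G(λ² q/2)` is `2√(q/2) · √r G'(r)` at `r = λ² q/2`, which tends to
`2√(q/2) / √2 = √q`. A function whose derivative tends to `L` at infinity is `L t + o(t)` by the
mean value theorem, so `Φ_A(λz)/λ → √q = ‖z‖_A`.
-/

open Matrix Filter Asymptotics Topology

lemma isLittleO_id_of_tendsto_deriv_zero {E : Type*} [NormedAddCommGroup E] [NormedSpace ℝ E]
    {f : ℝ → E} (hf : ∀ᶠ t in atTop, DifferentiableAt ℝ f t)
    (hf' : Tendsto (deriv f) atTop (𝓝 0)) : f =o[atTop] id := by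
  refine isLittleO_iff.2 fun c hc => ?_
  obtain ⟨T, hT⟩ := eventually_atTop.1 <| (eventually_ge_atTop 0).and <|
    hf.and (hf'.eventually (Metric.closedBall_mem_nhds 0 (half_pos hc)))
  have hT0 : 0 ≤ T := (hT T le_rfl).1
  have hmvt : ∀ t ≥ T, ‖f t - f T‖ ≤ c / 2 * (t - T) := fun t ht =>
    norm_image_sub_le_of_norm_deriv_le_segment'
      (fun x hx => (hT x hx.1).2.1.hasDerivAt.hasDerivWithinAt)
      (fun x hx => by simpa using (hT x hx.1).2.2) t ⟨ht, le_rfl⟩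
  filter_upwards [eventually_ge_atTop T, eventually_ge_atTop (2 * ‖f T‖ / c)] with t htT ht
  have hfT : ‖f T‖ ≤ c / 2 * t := by
    rw [div_le_iff₀ hc] at ht
    linarith
  rw [id, Real.norm_of_nonneg (hT0.trans htT)]
  calc ‖f t‖ ≤ ‖f t - f T‖ + ‖f T‖ := norm_le_norm_sub_add _ _
    _ ≤ c / 2 * (t - T) + c / 2 * t := add_le_add (hmvt t htT) hfT
    _ ≤ c * t := by nlinarith

lemma tendsto_div_self_of_tendsto_deriv {f : ℝ → ℝ} {L : ℝ}
    (hf : ∀ᶠ t in atTop, DifferentiableAt ℝ f t) (hf' : Tendsto (deriv f) atTop (𝓝 L)) :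
    Tendsto (fun t => f t / t) atTop (𝓝 L) := by
  have hdiff : ∀ᶠ t in atTop, DifferentiableAt ℝ (fun t => f t - L * t) t :=
    hf.mono fun t ht => ht.sub (differentiableAt_id.const_mul L)
  have hderiv : Tendsto (deriv fun t => f t - L * t) atTop (𝓝 0) := by
    refine (sub_self L ▸ hf'.sub_const L).congr' ?_
    filter_upwards [hf] with t ht
    exact (ht.hasDerivAt.sub ((hasDerivAt_id' t).const_mul L) |>.deriv.trans (by ring)).symm
  have hslope := (isLittleO_id_of_tendsto_deriv_zero hdiff hderiv).tendsto_div_nhds_zero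
  refine (zero_add L ▸ hslope.add_const L).congr' ?_
  filter_upwards [eventually_ne_atTop 0] with t ht
  simp only [id]
  field_simp
  ring

lemma tendsto_deriv_comp_sq_mul {G : ℝ → ℝ} {a c : ℝ} (ha : 0 < a)
    (hG : ∀ r > 0, DifferentiableAt ℝ G r)
    (hlim : Tendsto (fun r => √r * deriv G r) atTop (𝓝 c)) :
    Tendsto (deriv fun t => G (t ^ 2 * a)) atTop (𝓝 (2 * √a * c)) := by
  have hinner : Tendsto (fun t : ℝ => t ^ 2 * a) atTop atTop :=
    (tendsto_pow_atTop two_ne_zero).atTop_mul_const ha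
  refine ((hlim.comp hinner).const_mul (2 * √a)).congr' ?_
  filter_upwards [eventually_gt_atTop 0] with t ht
  have hchain : HasDerivAt (fun t => G (t ^ 2 * a)) (deriv G (t ^ 2 * a) * (2 * t * a)) t := by
    have := (hG _ (by positivity)).hasDerivAt.comp t ((hasDerivAt_pow 2 t).mul_const a)
    exact this.congr_deriv (by ring)
  rw [hchain.deriv, Function.comp_apply, Real.sqrt_mul' _ ha.le, Real.sqrt_sq ht.le]
  ring_nf
  rw [Real.sq_sqrt ha.le]
  ring

lemma tendsto_comp_sq_mul_div_self {G : ℝ → ℝ} {a c : ℝ} (ha : 0 < a)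
    (hG : ∀ r > 0, DifferentiableAt ℝ G r)
    (hlim : Tendsto (fun r => √r * deriv G r) atTop (𝓝 c)) :
    Tendsto (fun t => G (t ^ 2 * a) / t) atTop (𝓝 (2 * √a * c)) := by
  refine tendsto_div_self_of_tendsto_deriv ?_ (tendsto_deriv_comp_sq_mul ha hG hlim)
  filter_upwards [eventually_gt_atTop 0] with t ht
  exact (hG _ (by positivity)).comp t (by fun_prop)

theorem anisotropic_recession_general {d : ℕ}
    (A : Matrix (Fin d) (Fin d) ℝ) (hpd : A.PosDef)
    (G : ℝ → ℝ)
    (hG1 : ContDiffOn ℝ 1 G (Set.Ici 0))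
    (hG0 : G 0 = 0)
    (hlim : Filter.Tendsto (fun r : ℝ => Real.sqrt r * deriv G r)
      Filter.atTop (nhds (1 / Real.sqrt 2))) :
    ∀ z : Fin d → ℝ,
      Filter.Tendsto (fun lam : ℝ => G ((lam • z) ⬝ᵥ A.mulVec (lam • z) / 2) / lam)
        Filter.atTop (nhds (Real.sqrt (z ⬝ᵥ A.mulVec z))) := by
  intro z
  rcases eq_or_ne z 0 with rfl | hz
  · simp [hG0]
  have hq : 0 < z ⬝ᵥ A *ᵥ z := hpd.dotProduct_mulVec_pos hz
  have hquad (lam : ℝ) : (lam • z) ⬝ᵥ A *ᵥ (lam • z) / 2 = lam ^ 2 * (z ⬝ᵥ A *ᵥ z / 2) := by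
    simp only [mulVec_smul, dotProduct_smul, smul_dotProduct, smul_eq_mul]
    ring
  have hG (r : ℝ) (hr : 0 < r) : DifferentiableAt ℝ G r :=
    (hG1.differentiableOn one_ne_zero).differentiableAt (Ici_mem_nhds hr)
  have hlimit : 2 * √(z ⬝ᵥ A *ᵥ z / 2) * (1 / √2) = √(z ⬝ᵥ A *ᵥ z) := by
    rw [Real.sqrt_div' _ zero_le_two]
    field_simp
    rw [Real.sq_sqrt zero_le_two]
  simpa only [hquad, hlimit] using tendsto_comp_sq_mul_div_self (half_pos hq) hG hlim

theorem anisotropic_recession {d : ℕ}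
    (A : Matrix (Fin d) (Fin d) ℝ) (hsymm : A.IsSymm) (hpd : A.PosDef)
    (G : ℝ → ℝ)
    (hG1 : ContDiffOn ℝ 1 G (Set.Ici 0))
    (hG0 : G 0 = 0)
    (hGnonneg : ∀ r : ℝ, 0 ≤ r → 0 ≤ G r)
    (hlim : Filter.Tendsto (fun r : ℝ => Real.sqrt r * deriv G r)
      Filter.atTop (nhds (1 / Real.sqrt 2))) :
    ∀ z : Fin d → ℝ,
      Filter.Tendsto (fun lam : ℝ => G ((lam • z) ⬝ᵥ A.mulVec (lam • z) / 2) / lam)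
        Filter.atTop (nhds (Real.sqrt (z ⬝ᵥ A.mulVec z))) :=
  anisotropic_recession_general A hpd G hG1 hG0 hlim
end

section
/- Let A be a d×d diagonal matrix with strictly positive diagonal entries a_{ii}, and let g : [0,∞) → (0,∞) be C¹ with |z g'(z)/g(z)| ≤ 1/2 for all z ≥ 0. Define ψ(r) = g(‖r‖_A²/2) A rᵀ. Then the Jacobian matrix Dψ(r) is symmetric positive semidefinite for every r ∈ ℝ^d. -/
/-!
With `s = rᵀAr/2`, the Jacobian of `ψ` at `r` is `g(s)·A + g'(s)·(Ar)(Ar)ᵀ`, whose quadratic form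
at `x` is `g(s)·xᵀAx + g'(s)·(rᵀAx)²`. When `g'(s) < 0`, Cauchy–Schwarz for the semi-inner product
of `A`, `(rᵀAx)² ≤ (rᵀAr)(xᵀAx) = 2s·xᵀAx`, bounds this below by `(g(s) + 2s·g'(s))·xᵀAx`, and the
decay condition `|s g'(s)/g(s)| ≤ 1/2` is exactly what makes `g(s) + 2s·g'(s) ≥ 0`.
-/

open Matrix Set Topology

namespace Matrix

variable {m n : Type*} [Fintype n]

theorem IsSymm.dotProduct_mulVec_comm {R : Type*} [CommSemiring R] {A : Matrix n n R}
    (hA : A.IsSymm) (x y : n → R) : x ⬝ᵥ A *ᵥ y = y ⬝ᵥ A *ᵥ x := by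
  rw [dotProduct_mulVec, ← mulVec_transpose, hA.eq, dotProduct_comm]

theorem PosSemidef.dotProduct_mulVec_sq_le {A : Matrix n n ℝ} (hA : A.PosSemidef)
    (x y : n → ℝ) : (x ⬝ᵥ A *ᵥ y) ^ 2 ≤ (x ⬝ᵥ A *ᵥ x) * (y ⬝ᵥ A *ᵥ y) := by
  have hsymm := (isHermitian_iff_isSymm.mp hA.isHermitian).dotProduct_mulVec_comm y x
  have h := discrim_le_zero (K := ℝ) (a := y ⬝ᵥ A *ᵥ y) (b := 2 * (x ⬝ᵥ A *ᵥ y))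
    (c := x ⬝ᵥ A *ᵥ x) fun t => by
      have := hA.dotProduct_mulVec_nonneg (x + t • y)
      simp only [star_trivial, mulVec_add, mulVec_smul, add_dotProduct, dotProduct_add,
        smul_dotProduct, dotProduct_smul, smul_eq_mul, hsymm] at this
      linarith
  rw [discrim] at h
  linarith

theorem posSemidef_smul_add_smul_vecMulVec {A : Matrix n n ℝ} (hA : A.PosSemidef) {γ c : ℝ}
    (r : n → ℝ) (hγ : 0 ≤ γ) (h : 0 ≤ γ + c * (r ⬝ᵥ A *ᵥ r)) :
    (γ • A + c • vecMulVec (A *ᵥ r) (A *ᵥ r)).PosSemidef := by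
  have hsymm : A.IsSymm := isHermitian_iff_isSymm.mp hA.isHermitian
  refine .of_dotProduct_mulVec_nonneg ?_ fun x => ?_
  · rw [isHermitian_iff_isSymm]
    simp [IsSymm, transpose_vecMulVec, hsymm.eq]
  have hAx : 0 ≤ x ⬝ᵥ A *ᵥ x := by simpa using hA.dotProduct_mulVec_nonneg x
  have hform : star x ⬝ᵥ (γ • A + c • vecMulVec (A *ᵥ r) (A *ᵥ r)) *ᵥ x
      = γ * (x ⬝ᵥ A *ᵥ x) + c * (r ⬝ᵥ A *ᵥ x) ^ 2 := by
    simp [add_mulVec, smul_mulVec, vecMulVec_mulVec, dotProduct_comm (A *ᵥ r) x,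
      hsymm.dotProduct_mulVec_comm x r, sq]
  rw [hform]
  rcases le_or_gt 0 c with hc | hc
  · exact add_nonneg (mul_nonneg hγ hAx) (mul_nonneg hc (sq_nonneg _))
  · nlinarith [mul_le_mul_of_nonpos_left (hA.dotProduct_mulVec_sq_le r x) hc.le,
      mul_nonneg h hAx]

variable [DecidableEq n]

theorem hasFDerivAt_dotProduct_mulVec_self (A : Matrix n n ℝ) (r : n → ℝ) :
    HasFDerivAt (fun x : n → ℝ => x ⬝ᵥ A *ᵥ x)
      (LinearMap.toContinuousLinearMap (dotProductEquiv ℝ n ((A + Aᵀ) *ᵥ r))) r := by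
  have hA : HasFDerivAt (fun x : n → ℝ => A *ᵥ x)
      (LinearMap.toContinuousLinearMap (toLin' A)) r :=
    (LinearMap.toContinuousLinearMap (toLin' A)).hasFDerivAt
  refine (HasFDerivAt.fun_sum (u := Finset.univ) fun i _ =>
    (hasFDerivAt_apply i r).mul ((hasFDerivAt_apply i (A *ᵥ r)).comp r hA)).congr_fderiv ?_
  ext v
  simp only [Function.comp_apply, add_comm, _root_.sum_apply, _root_.add_apply,
    _root_.smul_apply, ContinuousLinearMap.proj_apply, smul_eq_mul, ContinuousLinearMap.comp_apply,
    LinearMap.coe_toContinuousLinearMap', toLin'_apply, add_mulVec, mulVec_transpose, map_add,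
    dotProductEquiv_apply_apply, ← dotProduct_mulVec]
  exact Finset.sum_add_distrib

theorem hasFDerivAt_smul_mulVec {A : Matrix n n ℝ} (hA : A.IsSymm) {g : ℝ → ℝ} {c : ℝ}
    {t : Set ℝ} {r : n → ℝ} (hg : HasDerivWithinAt g c t (r ⬝ᵥ A *ᵥ r / 2))
    (ht : ∀ᶠ x in 𝓝 r, x ⬝ᵥ A *ᵥ x / 2 ∈ t) :
    HasFDerivAt (fun x => g (x ⬝ᵥ A *ᵥ x / 2) • A *ᵥ x)
      (LinearMap.toContinuousLinearMap
        (toLin' (g (r ⬝ᵥ A *ᵥ r / 2) • A + c • vecMulVec (A *ᵥ r) (A *ᵥ r)))) r := by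
  have hq : HasFDerivAt (fun x => x ⬝ᵥ A *ᵥ x / 2)
      ((2⁻¹ : ℝ) • LinearMap.toContinuousLinearMap (dotProductEquiv ℝ n ((A + Aᵀ) *ᵥ r))) r := by
    simpa only [div_eq_mul_inv] using (hasFDerivAt_dotProduct_mulVec_self A r).mul_const 2⁻¹
  have hlin : HasFDerivAt (fun x : n → ℝ => A *ᵥ x)
      (LinearMap.toContinuousLinearMap (toLin' A)) r :=
    (LinearMap.toContinuousLinearMap (toLin' A)).hasFDerivAt
  refine ((hg.comp_hasFDerivAt r hq ht).smul hlin).congr_fderiv ?_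
  ext v i
  simp only [Function.comp_apply, hA.eq, add_mulVec, map_add, smul_add, _root_.add_apply,
    _root_.smul_apply, LinearMap.coe_toContinuousLinearMap', toLin'_apply,
    ContinuousLinearMap.smulRight_apply, dotProductEquiv_apply_apply, smul_eq_mul, Pi.add_apply,
    Pi.smul_apply, map_smul, vecMulVec_mulVec, op_smul_eq_smul, add_right_inj]
  ring

noncomputable def jacobian (ψ : (n → ℝ) → m → ℝ) (r : n → ℝ) : Matrix m n ℝ :=
  of fun i j => fderiv ℝ (fun x => ψ x i) r (Pi.single j 1)

theorem jacobian_eq_of_hasFDerivAt {ψ : (n → ℝ) → m → ℝ} {J : Matrix m n ℝ} {r : n → ℝ}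
    (h : HasFDerivAt ψ (LinearMap.toContinuousLinearMap (toLin' J)) r) : jacobian ψ r = J := by
  ext i j
  rw [jacobian, of_apply, (hasFDerivAt_pi'.mp h i).fderiv]
  simp

end Matrix

theorem add_two_mul_mul_derivWithin_Ici_nonneg {g : ℝ → ℝ} {s : ℝ} (hs : 0 ≤ s) (hgs : 0 < g s)
    (hdecay : |s * deriv g s / g s| ≤ 1 / 2) : 0 ≤ g s + 2 * s * derivWithin g (Ici 0) s := by
  rcases hs.eq_or_lt with rfl | hs
  · simpa using hgs.le
  rw [derivWithin_of_mem_nhds (Ici_mem_nhds hs)]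
  rw [abs_div, abs_of_pos hgs, div_le_iff₀ hgs] at hdecay
  linarith [neg_abs_le (s * deriv g s)]

theorem jacobian_psd_of_diagonal {d : ℕ}
    (a : Fin d → ℝ) (ha : ∀ i, 0 < a i)
    (A : Matrix (Fin d) (Fin d) ℝ) (hA : A = Matrix.diagonal a)
    (g : ℝ → ℝ)
    (hgpos : ∀ z : ℝ, 0 ≤ z → 0 < g z)
    (hg1 : ContDiffOn ℝ 1 g (Set.Ici 0))
    (hgdecay : ∀ z : ℝ, 0 ≤ z → |z * deriv g z / g z| ≤ 1 / 2)
    (ψ : (Fin d → ℝ) → (Fin d → ℝ))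
    (hψ : ∀ r, ψ r = g (r ⬝ᵥ A.mulVec r / 2) • A.mulVec r) :
    ∀ r : Fin d → ℝ,
      (Matrix.of fun i j => fderiv ℝ (fun x => ψ x i) r (Pi.single j 1)).IsSymm ∧
      (Matrix.of fun i j => fderiv ℝ (fun x => ψ x i) r (Pi.single j 1)).PosSemidef := by
  intro r
  obtain rfl : ψ = _ := funext hψ
  have hApsd : A.PosSemidef := hA ▸ PosSemidef.diagonal fun i => (ha i).le
  have hq : ∀ x : Fin d → ℝ, x ⬝ᵥ A *ᵥ x / 2 ∈ Ici 0 := fun x =>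
    div_nonneg (by simpa using hApsd.dotProduct_mulVec_nonneg x) zero_le_two
  set s := r ⬝ᵥ A *ᵥ r / 2
  -- `g` is only differentiable on `[0, ∞)`, which contains every value of the quadratic form.
  have hg : HasDerivWithinAt g (derivWithin g (Ici 0) s) (Ici 0) s :=
    (hg1.differentiableOn one_ne_zero s (hq r)).hasDerivWithinAt
  have hJ := jacobian_eq_of_hasFDerivAt
    (hasFDerivAt_smul_mulVec (isHermitian_iff_isSymm.mp hApsd.isHermitian) hg (.of_forall hq))
  have hc : 0 ≤ g s + derivWithin g (Ici 0) s * (r ⬝ᵥ A *ᵥ r) := by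
    linarith [add_two_mul_mul_derivWithin_Ici_nonneg (hq r) (hgpos s (hq r)) (hgdecay s (hq r))]
  have hpsd := posSemidef_smul_add_smul_vecMulVec hApsd r (hgpos s (hq r)).le hc
  change (jacobian _ r).IsSymm ∧ (jacobian _ r).PosSemidef
  rw [hJ]
  exact ⟨isHermitian_iff_isSymm.mp hpsd.isHermitian, hpsd⟩
end
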